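/- Transitivity of explicit subtyping: for every type environment Γ and types S, Q, T, if sub(Γ, S, Q) and sub(Γ, Q, T) are derivable, then sub(Γ, S, T) is derivable. -/

import Mathlib

/-- Types of pure System F<:, with named type variables drawn from ℕ.
`all X S T` is `∀X<:S.T`, binding `X` in `T` but not in `S`. -/
inductive Tp : Type
  | var : ℕ → Tp
  | top : Tp
  | arr : Tp → Tp → Tp
  | all : ℕ → Tp → Tp → Tp
  deriving DecidableEq

/-- Free type variables of a type. -/
def Tp.fv : Tp → Finset ℕ
  | .var x => {x}
  | .top => ∅
  | .arr s t => s.fv ∪ t.fv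
  | .all x s t => s.fv ∪ (t.fv.erase x)

/-- Capture-avoiding simultaneous renaming of the free variables of a type
along `σ`; bound variables are renamed where necessary to avoid capture. -/
def Tp.ren (σ : ℕ → ℕ) : Tp → Tp
  | .var x => .var (σ x)
  | .top => .top
  | .arr s t => .arr (s.ren σ) (t.ren σ)
  | .all x s t =>
      let bad : Finset ℕ := (t.fv.erase x).image σ
      let x' : ℕ := if x ∈ bad then bad.sup id + 1 else x
      .all x' (s.ren σ) (t.ren (Function.update σ x x'))

/-- Capture-avoiding renaming of every free occurrence of `y` by `z`. -/
def Tp.renVar (y z : ℕ) (t : Tp) : Tp := t.ren (Function.update id y z)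

/-- Type environments: finite lists of pairs ⟨variable, type⟩
(the head of the list is the most recently introduced binding). -/
abbrev TpEnv := List (ℕ × Tp)

/-- The domain of an environment: the set of its variables. -/
def envDom (Γ : TpEnv) : Finset ℕ := (Γ.map Prod.fst).toFinset

/-- `Closed T Γ`: every free variable of `T` is bound to some type in `Γ`. -/
def Closed (T : Tp) (Γ : TpEnv) : Prop := ∀ Y ∈ T.fv, ∃ U, (Y, U) ∈ Γ

/-- Well-formedness of type environments. -/
inductive OkEnv : TpEnv → Prop
  | nil : OkEnv []
  | cons {Γ : TpEnv} {X : ℕ} {T : Tp} :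
      OkEnv Γ → X ∉ envDom Γ → Closed T Γ → OkEnv ((X, T) :: Γ)

/-- The original algorithmic subtyping judgment `Γ ⊢ S <: T`. -/
inductive ASub : TpEnv → Tp → Tp → Prop
  | top (Γ : TpEnv) (S : Tp) : ASub Γ S .top
  | refl (Γ : TpEnv) (X : ℕ) : ASub Γ (.var X) (.var X)
  | trans {Γ : TpEnv} {X : ℕ} {U T : Tp} :
      (X, U) ∈ Γ → ASub Γ U T → ASub Γ (.var X) T
  | arr {Γ : TpEnv} {S1 S2 T1 T2 : Tp} :
      ASub Γ T1 S1 → ASub Γ S2 T2 → ASub Γ (.arr S1 S2) (.arr T1 T2)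
  | all {Γ : TpEnv} {X : ℕ} {S1 S2 T1 T2 : Tp} :
      ASub Γ T1 S1 → ASub ((X, T1) :: Γ) S2 T2 →
      ASub Γ (.all X S1 S2) (.all X T1 T2)

/-- The explicit (sequent-style) subtyping relation `sub(Γ, S, T)`. -/
inductive ESub : TpEnv → Tp → Tp → Prop
  | top {Γ : TpEnv} {S : Tp} : OkEnv Γ → Closed S Γ → ESub Γ S .top
  | var {Γ : TpEnv} {X : ℕ} {U : Tp} :
      OkEnv Γ → (X, U) ∈ Γ → ESub Γ (.var X) (.var X)
  | trs {Γ : TpEnv} {X : ℕ} {U T : Tp} :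
      (X, U) ∈ Γ → ESub Γ U T → ESub Γ (.var X) T
  | arr {Γ : TpEnv} {S1 S2 T1 T2 : Tp} :
      ESub Γ T1 S1 → ESub Γ S2 T2 → ESub Γ (.arr S1 S2) (.arr T1 T2)
  | all {Γ : TpEnv} {X : ℕ} {S1 S2 T1 T2 : Tp} :
      ESub Γ T1 S1 →
      (∀ Y : ℕ, OkEnv ((Y, T1) :: Γ) →
        ESub ((Y, T1) :: Γ) (Tp.renVar X Y S2) (Tp.renVar X Y T2)) →
      ESub Γ (.all X S1 S2) (.all X T1 T2)

/-! ### Auxiliary lemmas -/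

lemma Tp.fv_ren (t : Tp) : ∀ σ : ℕ → ℕ, (t.ren σ).fv = t.fv.image σ := by
  induction t with
  | var x => intro σ; simp [Tp.ren, Tp.fv]
  | top => intro σ; simp [Tp.ren, Tp.fv]
  | arr s t ihs iht => intro σ; simp [Tp.ren, Tp.fv, ihs, iht, Finset.image_union]
  | all x s t ihs iht =>
    intro σ
    set bad : Finset ℕ := (t.fv.erase x).image σ with hbad
    set x' : ℕ := if x ∈ bad then bad.sup id + 1 else x with hx'
    have hx'bad : x' ∉ bad := by
      by_cases h : x ∈ bad
      · rw [hx', if_pos h]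
        intro hc
        have hle := Finset.le_sup (f := id) hc
        simp only [id_eq] at hle
        omega
      · rw [hx', if_neg h]; exact h
    show (Tp.all x' (s.ren σ) (t.ren (Function.update σ x x'))).fv = _
    rw [Tp.fv, Tp.fv, ihs, iht, Finset.image_union]
    congr 1
    ext w
    simp only [Finset.mem_erase, Finset.mem_image]
    constructor
    · rintro ⟨hw, y, hy, rfl⟩
      by_cases hxy : y = x
      · subst hxy; simp [Function.update_self] at hw
      · exact ⟨y, ⟨hxy, hy⟩, (Function.update_of_ne hxy _ _).symm⟩
    · rintro ⟨y, ⟨hyx, hy⟩, rfl⟩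
      have hmem : σ y ∈ bad := by
        rw [hbad]; exact Finset.mem_image_of_mem σ (Finset.mem_erase.mpr ⟨hyx, hy⟩)
      refine ⟨fun hc => hx'bad (hc ▸ hmem), y, hy, Function.update_of_ne hyx _ _⟩

/-- Size of a type. -/
def Tp.size : Tp → ℕ
  | .var _ => 1
  | .top => 1
  | .arr s t => s.size + t.size + 1
  | .all _ s t => s.size + t.size + 1

lemma Tp.size_pos (t : Tp) : 0 < t.size := by cases t <;> simp [Tp.size]

lemma Tp.size_ren (t : Tp) : ∀ σ : ℕ → ℕ, (t.ren σ).size = t.size := by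
  induction t with
  | var x => intro σ; rfl
  | top => intro σ; rfl
  | arr s t ihs iht => intro σ; simp [Tp.ren, Tp.size, ihs, iht]
  | all x s t ihs iht => intro σ; simp [Tp.ren, Tp.size, ihs, iht]

lemma Tp.size_renVar (y z : ℕ) (t : Tp) : (Tp.renVar y z t).size = t.size :=
  t.size_ren _

lemma envDom_iff {X : ℕ} {Γ : TpEnv} : X ∈ envDom Γ ↔ ∃ U, (X, U) ∈ Γ := by
  simp only [envDom, List.mem_toFinset, List.mem_map]
  constructor
  · rintro ⟨⟨a, b⟩, h, rfl⟩; exact ⟨b, h⟩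
  · rintro ⟨U, h⟩; exact ⟨(X, U), h, rfl⟩

/-- Regularity: every derivable judgment has a well-formed environment and
closed types on both sides. -/
lemma ESub.regular {Γ : TpEnv} {S T : Tp} (h : ESub Γ S T) :
    OkEnv Γ ∧ Closed S Γ ∧ Closed T Γ := by
  induction h with
  | top ok cl => exact ⟨ok, cl, fun Y hY => by simp [Tp.fv] at hY⟩
  | var ok mem =>
      refine ⟨ok, ?_, ?_⟩ <;>
        · intro Y hY; simp [Tp.fv] at hY; subst hY; exact ⟨_, mem⟩
  | trs mem h ih =>
      refine ⟨ih.1, ?_, ih.2.2⟩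
      intro Y hY; simp [Tp.fv] at hY; subst hY; exact ⟨_, mem⟩
  | arr h1 h2 ih1 ih2 =>
      refine ⟨ih1.1, ?_, ?_⟩
      · intro Y hY
        simp only [Tp.fv, Finset.mem_union] at hY
        exact hY.elim (ih1.2.2 Y) (ih2.2.1 Y)
      · intro Y hY
        simp only [Tp.fv, Finset.mem_union] at hY
        exact hY.elim (ih1.2.1 Y) (ih2.2.2 Y)
  | all h1 h2 ih1 ih2 =>
      rename_i Γ' X S1 S2 T1 T2
      obtain ⟨ok, clT1, clS1⟩ := ih1
      set Z : ℕ := ((envDom Γ' ∪ S2.fv ∪ T2.fv).sup id) + 1 with hZ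
      have hZ' : Z ∉ envDom Γ' ∪ S2.fv ∪ T2.fv := by
        intro hc
        have hle := Finset.le_sup (f := id) hc
        rw [hZ] at hle
        simp only [id_eq] at hle
        omega
      have hZdom : Z ∉ envDom Γ' := fun h => hZ' (by simp [h])
      have hZS2 : Z ∉ S2.fv := fun h => hZ' (by simp [h])
      have hZT2 : Z ∉ T2.fv := fun h => hZ' (by simp [h])
      have okZ : OkEnv ((Z, T1) :: Γ') := .cons ok hZdom clT1
      obtain ⟨-, clS2', clT2'⟩ := ih2 Z okZ
      have key : ∀ (A : Tp), Z ∉ A.fv → Closed (Tp.renVar X Z A) ((Z, T1) :: Γ') →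
          ∀ Y ∈ A.fv.erase X, ∃ U, (Y, U) ∈ Γ' := by
        intro A hZA clA Y hY
        rw [Finset.mem_erase] at hY
        obtain ⟨hYX, hY⟩ := hY
        have hmem : Y ∈ (Tp.renVar X Z A).fv := by
          rw [Tp.renVar, Tp.fv_ren]
          exact Finset.mem_image.mpr ⟨Y, hY, Function.update_of_ne hYX _ _⟩
        obtain ⟨U, hU⟩ := clA Y hmem
        rcases List.mem_cons.mp hU with h | h
        · injection h with hYZ hUT
          subst hYZ
          exact absurd hY hZA
        · exact ⟨U, h⟩
      refine ⟨ok, ?_, ?_⟩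
      · intro Y hY
        simp only [Tp.fv, Finset.mem_union] at hY
        exact hY.elim (clS1 Y) (key S2 hZS2 clS2' Y)
      · intro Y hY
        simp only [Tp.fv, Finset.mem_union] at hY
        exact hY.elim (clT1 Y) (key T2 hZT2 clT2' Y)

/-- Weakening/monotonicity in the environment. -/
lemma ESub.weaken {Γ : TpEnv} {S T : Tp} (h : ESub Γ S T) :
    ∀ Γ' : TpEnv, OkEnv Γ' → (∀ p ∈ Γ, p ∈ Γ') → ESub Γ' S T := by
  induction h with
  | top ok cl =>
      intro Γ' ok' sub
      exact .top ok' fun Y hY => (cl Y hY).imp fun U hU => sub _ hU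
  | var ok mem =>
      intro Γ' ok' sub
      exact .var ok' (sub _ mem)
  | trs mem h ih =>
      intro Γ' ok' sub
      exact .trs (sub _ mem) (ih Γ' ok' sub)
  | arr h1 h2 ih1 ih2 =>
      intro Γ' ok' sub
      exact .arr (ih1 Γ' ok' sub) (ih2 Γ' ok' sub)
  | all h1 h2 ih1 ih2 =>
      rename_i Γ0 X0 S1 S2 T1 T2
      intro Γ' ok' sub
      refine .all (ih1 Γ' ok' sub) ?_
      intro Y okY'
      have regs := h1.regular
      have hYd : Y ∉ envDom Γ0 := by
        cases okY' with
        | cons _ hnd _ =>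
          intro hc
          obtain ⟨U, hU⟩ := envDom_iff.mp hc
          exact hnd (envDom_iff.mpr ⟨U, sub _ hU⟩)
      have okY : OkEnv ((Y, T1) :: Γ0) := .cons regs.1 hYd regs.2.1
      refine ih2 Y okY _ okY' ?_
      intro p hp
      rcases List.mem_cons.mp hp with h | h
      · exact h ▸ List.mem_cons_self
      · exact List.mem_cons_of_mem _ (sub _ h)

/-- Transitivity at cut type `Q`. -/
def TransAt (Q : Tp) : Prop :=
  ∀ Γ S T, ESub Γ S Q → ESub Γ Q T → ESub Γ S T

/-- Narrowing at cut type `Q`: the environment can be replaced by any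
well-formed environment that keeps every binding, except that bindings of
type `Q` may be narrowed to a subtype of `Q`. -/
def NarrowAt (Q : Tp) : Prop :=
  ∀ Γ S T, ESub Γ S T → ∀ Γ' : TpEnv, OkEnv Γ' →
    (∀ p ∈ Γ, p ∈ Γ' ∨ (p.2 = Q ∧ ∃ P, (p.1, P) ∈ Γ' ∧ ESub Γ' P Q)) →
    ESub Γ' S T

lemma trans_and_narrow : ∀ n : ℕ, ∀ Q : Tp, Q.size ≤ n → TransAt Q ∧ NarrowAt Q := by
  intro n
  induction n with
  | zero => intro Q h; exact absurd h (by have := Q.size_pos; omega)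
  | succ n ih =>
    -- transitivity, for all cut types of size ≤ n+1
    have ht : ∀ Γ S Q', ESub Γ S Q' →
        ∀ T, ESub Γ Q' T → Q'.size ≤ n + 1 → ESub Γ S T := by
      intro Γ S Q' h1
      induction h1 with
      | top ok cl =>
          intro T h2 _
          cases h2 with
          | top ok2 cl2 => exact .top ok cl
      | var ok mem => intro T h2 _; exact h2
      | trs mem h ihh => intro T h2 hsz; exact .trs mem (ihh T h2 hsz)
      | arr ha hb iha ihb =>
          rename_i Γ' S1 S2 Q1 Q2
          intro T h2 hsz
          have hsz1 : Q1.size ≤ n := by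
            have := Q2.size_pos; simp [Tp.size] at hsz; omega
          have hsz2 : Q2.size ≤ n := by
            have := Q1.size_pos; simp [Tp.size] at hsz; omega
          cases h2 with
          | top ok2 cl2 =>
              have hr := (ESub.arr ha hb).regular
              exact .top hr.1 hr.2.1
          | arr hc hd =>
              exact .arr ((ih Q1 hsz1).1 _ _ _ hc ha) ((ih Q2 hsz2).1 _ _ _ hb hd)
      | all ha hb iha ihb =>
          rename_i Γ' X S1 S2 Q1 Q2
          intro T h2 hsz
          have hsz1 : Q1.size ≤ n := by
            have := Q2.size_pos; simp [Tp.size] at hsz; omega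
          have hsz2 : Q2.size ≤ n := by
            have := Q1.size_pos; simp [Tp.size] at hsz; omega
          cases h2 with
          | top ok2 cl2 =>
              have hr := (ESub.all ha hb).regular
              exact .top hr.1 hr.2.1
          | all hc hd =>
              rename_i T1 T2
              refine .all ((ih Q1 hsz1).1 _ _ _ hc ha) ?_
              intro Y okY
              have regQ1 := ha.regular
              have hYd : Y ∉ envDom Γ' := by cases okY with | cons _ hd _ => exact hd
              have okYQ : OkEnv ((Y, Q1) :: Γ') := .cons regQ1.1 hYd regQ1.2.1
              have h5 := hb Y okYQ
              have hcw : ESub ((Y, T1) :: Γ') T1 Q1 :=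
                hc.weaken _ okY fun p hp => List.mem_cons_of_mem _ hp
              have h6 : ESub ((Y, T1) :: Γ') (Tp.renVar X Y S2) (Tp.renVar X Y Q2) := by
                refine (ih Q1 hsz1).2 _ _ _ h5 _ okY ?_
                intro p hp
                rcases List.mem_cons.mp hp with h | h
                · right
                  subst h
                  exact ⟨rfl, T1, List.mem_cons_self, hcw⟩
                · exact Or.inl (List.mem_cons_of_mem _ h)
              have hszr : (Tp.renVar X Y Q2).size ≤ n := by
                rw [Tp.size_renVar]; exact hsz2
              exact (ih _ hszr).1 _ _ _ h6 (hd Y okY)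
    -- narrowing, for all cut types of size ≤ n+1
    have hn : ∀ Q : Tp, Q.size ≤ n + 1 → NarrowAt Q := by
      intro Q hQ Γ S T h
      induction h with
      | top ok cl =>
          intro Γ' ok' cond
          refine .top ok' ?_
          intro Y hY
          obtain ⟨U, hU⟩ := cl Y hY
          rcases cond _ hU with h | ⟨_, P, hP, _⟩
          exacts [⟨U, h⟩, ⟨P, hP⟩]
      | var ok mem =>
          intro Γ' ok' cond
          rcases cond _ mem with h | ⟨_, P, hP, _⟩
          exacts [.var ok' h, .var ok' hP]
      | trs mem h ihh =>
          intro Γ' ok' cond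
          have hUT' := ihh Γ' ok' cond
          rcases cond _ mem with h' | ⟨hq, P, hP, hPQ⟩
          · exact .trs h' hUT'
          · simp only at hq
            subst hq
            exact .trs hP (ht Γ' P _ hPQ _ hUT' hQ)
      | arr h1 h2 ih1 ih2 =>
          intro Γ' ok' cond
          exact .arr (ih1 Γ' ok' cond) (ih2 Γ' ok' cond)
      | all h1 h2 ih1 ih2 =>
          rename_i Γ0 X0 S1 S2 T1 T2
          intro Γ' ok' cond
          refine .all (ih1 Γ' ok' cond) ?_
          intro Y okY'
          have regs := h1.regular
          have hYd : Y ∉ envDom Γ0 := by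
            cases okY' with
            | cons _ hnd _ =>
              intro hc
              obtain ⟨U, hU⟩ := envDom_iff.mp hc
              rcases cond _ hU with h | ⟨_, P, hP, _⟩
              exacts [hnd (envDom_iff.mpr ⟨U, h⟩), hnd (envDom_iff.mpr ⟨P, hP⟩)]
          have okY : OkEnv ((Y, T1) :: Γ0) := .cons regs.1 hYd regs.2.1
          refine ih2 Y okY _ okY' ?_
          intro p hp
          rcases List.mem_cons.mp hp with h | h
          · exact Or.inl (h ▸ List.mem_cons_self)
          · rcases cond _ h with h' | ⟨hq, P, hP, hPQ⟩
            · exact Or.inl (List.mem_cons_of_mem _ h')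
            · exact Or.inr ⟨hq, P, List.mem_cons_of_mem _ hP,
                hPQ.weaken _ okY' fun q hq' => List.mem_cons_of_mem _ hq'⟩
    intro Q hQ
    exact ⟨fun Γ S T h1 h2 => ht Γ S Q h1 T h2 hQ, hn Q hQ⟩

theorem esub_transitivity (Γ : TpEnv) (S Q T : Tp)
    (h1 : ESub Γ S Q) (h2 : ESub Γ Q T) : ESub Γ S T :=
  (trans_and_narrow Q.size Q le_rfl).1 Γ S T h1 h2
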